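/- (Orthoplex bound, complex case) If φ_1,...,φ_n are unit vectors in ℂ^m with n > m², then max_{j≠l} |⟨φ_j, φ_l⟩| ≥ 1/√m. -/

import Mathlib

/-!
Send a unit vector `x ∈ ℂ^m` to the traceless Hermitian matrix `x xᴴ - I / m`, an element of the
real space of traceless Hermitian matrices, of dimension `m² - 1`. For the Frobenius inner product
the images of `x` and `y` have inner product `|⟨x, y⟩|² - 1 / m`, so coherence below `1 / √m` yields
`n` vectors with pairwise negative inner products in a real space of dimension `m² - 1`. A real
inner product space of dimension `d` holds at most `d + 1` such vectors, hence `n ≤ m²`.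
-/

open scoped InnerProductSpace

/-- The coherence of a family of vectors: the supremum of absolute pairwise inner products. -/
noncomputable def coherence (𝕜 : Type*) {E : Type*} [RCLike 𝕜] [NormedAddCommGroup E]
    [InnerProductSpace 𝕜 E] {n : ℕ} (φ : Fin n → E) : ℝ :=
  sSup {r : ℝ | ∃ j l : Fin n, j ≠ l ∧ r = ‖(⟪φ j, φ l⟫_𝕜 : 𝕜)‖}

open scoped ComplexConjugate

section PairwiseObtuse

variable {E : Type*} [NormedAddCommGroup E] [InnerProductSpace ℝ E] {ι : Type*} [Fintype ι]
  {v : ι → E}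

lemma nonpos_of_sum_smul_eq_zero_of_inner_neg (hv : Pairwise fun i j ↦ ⟪v i, v j⟫_ℝ < 0)
    {w : E} (hw : ∀ i, ⟪v i, w⟫_ℝ < 0) {g : ι → ℝ} (hg : ∑ i, g i • v i = 0) (i : ι) :
    g i ≤ 0 := by
  set u := ∑ i, (g i)⁺ • v i
  have hu : u = ∑ i, (g i)⁻ • v i := by
    rw [← sub_eq_zero, ← Finset.sum_sub_distrib]
    simpa only [← sub_smul, posPart_sub_negPart] using hg
  -- `⟪u, u⟫ = ∑ g⁺ⱼ g⁻ₖ ⟪vⱼ, vₖ⟫`, and `g⁺`, `g⁻` have disjoint supports, so only `j ≠ k` counts.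
  have hu0 : u = 0 := by
    refine real_inner_self_nonpos.mp ?_
    conv_lhs => arg 2; rw [hu]
    simp only [u, sum_inner, inner_sum, real_inner_smul_left, real_inner_smul_right]
    refine Finset.sum_nonpos fun j _ ↦ Finset.sum_nonpos fun k _ ↦ ?_
    rcases eq_or_ne j k with rfl | hjk
    · rcases le_total (g j) 0 with h | h
      · simp [posPart_eq_zero.2 h]
      · simp [negPart_eq_zero.2 h]
    · exact mul_nonpos_of_nonneg_of_nonpos (posPart_nonneg _)
        (mul_nonpos_of_nonneg_of_nonpos (negPart_nonneg _) (hv hjk.symm).le)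
  have hterms : ∑ j, (g j)⁺ * ⟪v j, w⟫_ℝ = 0 := by
    simpa only [u, sum_inner, real_inner_smul_left, inner_zero_left] using
      congrArg (⟪·, w⟫_ℝ) hu0
  have hi := (Finset.sum_eq_zero_iff_of_nonpos fun j _ ↦
    mul_nonpos_of_nonneg_of_nonpos (posPart_nonneg _) (hw j).le).1 hterms i (Finset.mem_univ _)
  rwa [mul_eq_zero, or_iff_left (hw i).ne, posPart_eq_zero] at hi

lemma linearIndependent_of_pairwise_inner_neg (hv : Pairwise fun i j ↦ ⟪v i, v j⟫_ℝ < 0)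
    {w : E} (hw : ∀ i, ⟪v i, w⟫_ℝ < 0) : LinearIndependent ℝ v := by
  refine Fintype.linearIndependent_iff.2 fun g hg i ↦
    le_antisymm (nonpos_of_sum_smul_eq_zero_of_inner_neg hv hw hg i) ?_
  have hg' : ∑ i, (-g) i • v i = 0 := by simp [neg_smul, hg]
  simpa using nonpos_of_sum_smul_eq_zero_of_inner_neg hv hw hg' i

lemma card_le_finrank_add_one_of_pairwise_inner_neg [FiniteDimensional ℝ E]
    (hv : Pairwise fun i j ↦ ⟪v i, v j⟫_ℝ < 0) : Fintype.card ι ≤ Module.finrank ℝ E + 1 := by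
  classical
  cases isEmpty_or_nonempty ι with
  | inl _ => simp
  | inr h =>
    obtain ⟨i₀⟩ := h
    have hli : LinearIndependent ℝ fun i : {i // i ≠ i₀} ↦ v i :=
      linearIndependent_of_pairwise_inner_neg (fun i j hij ↦ hv (Subtype.coe_ne_coe.2 hij))
        (w := v i₀) fun i ↦ hv i.2
    have hcard := hli.fintype_card_le_finrank
    rw [Fintype.card_subtype_compl, Fintype.card_subtype_eq] at hcard
    omega

end PairwiseObtuse

lemma norm_inner_le_coherence {𝕜 E : Type*} [RCLike 𝕜] [NormedAddCommGroup E]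
    [InnerProductSpace 𝕜 E] {n : ℕ} (φ : Fin n → E) {j l : Fin n} (hjl : j ≠ l) :
    ‖⟪φ j, φ l⟫_𝕜‖ ≤ coherence 𝕜 φ := by
  refine le_csSup (Set.Finite.bddAbove ?_) ⟨j, l, hjl, rfl⟩
  refine (Set.finite_range fun p : Fin n × Fin n ↦ ‖⟪φ p.1, φ p.2⟫_𝕜‖).subset ?_
  rintro _ ⟨j, l, -, rfl⟩
  exact ⟨(j, l), rfl⟩

section RankOneVec

variable {ι : Type*}

def identityVec (ι : Type*) [DecidableEq ι] : EuclideanSpace ℝ (ι × ι) :=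
  WithLp.toLp 2 fun p ↦ if p.1 = p.2 then 1 else 0

lemma identityVec_ne_zero [DecidableEq ι] [Nonempty ι] : identityVec ι ≠ 0 := by
  obtain ⟨i⟩ := ‹Nonempty ι›
  intro h
  simpa [identityVec] using congrArg (· (i, i)) h

variable [Fintype ι]

lemma sum_sum_mul_eq_zero_of_symm_of_antisymm {f g : ι → ι → ℝ} (hf : ∀ p q, f q p = f p q)
    (hg : ∀ p q, g q p = -g p q) : ∑ p, ∑ q, f p q * g p q = 0 := by
  have hswap : ∑ p, ∑ q, f p q * g p q = -∑ p, ∑ q, f p q * g p q := by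
    conv_lhs => rw [Finset.sum_comm]
    rw [← Finset.sum_neg_distrib]
    refine Finset.sum_congr rfl fun p _ ↦ ?_
    rw [← Finset.sum_neg_distrib]
    exact Finset.sum_congr rfl fun q _ ↦ by rw [hf, hg, mul_neg]
  linarith

lemma sum_sum_re_mul_im_eq_zero {c d : ι → ι → ℂ} (hc : ∀ p q, c q p = conj (c p q))
    (hd : ∀ p q, d q p = conj (d p q)) : ∑ p, ∑ q, (c p q).re * (d p q).im = 0 :=
  sum_sum_mul_eq_zero_of_symm_of_antisymm (fun p q ↦ by rw [hc, Complex.conj_re])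
    (fun p q ↦ by rw [hd, Complex.conj_im])

/-- The Hermitian matrix with entries `conj (x p) * x q`, recorded by the real coordinates
`re + im` of its entries. On Hermitian matrices this is an isometry for the Frobenius inner
product: the cross terms `re * im` cancel, real parts being symmetric and imaginary parts
antisymmetric. -/
noncomputable def rankOneVec (x : EuclideanSpace ℂ ι) : EuclideanSpace ℝ (ι × ι) :=
  WithLp.toLp 2 fun p ↦ (conj (x p.1) * x p.2).re + (conj (x p.1) * x p.2).im

lemma inner_rankOneVec (x y : EuclideanSpace ℂ ι) :
    ⟪rankOneVec x, rankOneVec y⟫_ℝ = ‖⟪x, y⟫_ℂ‖ ^ 2 := by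
  set a : ι → ι → ℂ := fun p q ↦ conj (x p) * x q
  set b : ι → ι → ℂ := fun p q ↦ conj (y p) * y q
  have ha : ∀ p q, a q p = conj (a p q) := fun p q ↦ by simp [a, mul_comm]
  have hb : ∀ p q, b q p = conj (b p q) := fun p q ↦ by simp [b, mul_comm]
  have hnorm : ‖⟪x, y⟫_ℂ‖ ^ 2 =
      ∑ p, ∑ q, ((a p q).re * (b p q).re + (a p q).im * (b p q).im) := by
    rw [← Complex.ofReal_re (‖_‖ ^ 2), Complex.ofReal_pow, ← Complex.mul_conj']
    simp only [PiLp.inner_apply, RCLike.inner_apply, map_sum, Finset.sum_mul_sum, Complex.re_sum]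
    refine Finset.sum_congr rfl fun p _ ↦ Finset.sum_congr rfl fun q _ ↦ ?_
    simp only [a, b, map_mul, Complex.conj_conj, Complex.mul_re, Complex.mul_im, Complex.conj_re,
      Complex.conj_im]
    ring
  calc ⟪rankOneVec x, rankOneVec y⟫_ℝ
      = ∑ p, ∑ q, ((a p q).re + (a p q).im) * ((b p q).re + (b p q).im) := by
        simp only [PiLp.inner_apply, rankOneVec, Fintype.sum_prod_type, RCLike.inner_apply,
          conj_trivial, a, b, mul_comm]
    _ = ∑ p, ∑ q, ((a p q).re * (b p q).re + (a p q).im * (b p q).im)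
          + ∑ p, ∑ q, (a p q).re * (b p q).im + ∑ p, ∑ q, (b p q).re * (a p q).im := by
        simp only [← Finset.sum_add_distrib]
        exact Finset.sum_congr rfl fun p _ ↦ Finset.sum_congr rfl fun q _ ↦ by ring
    _ = ‖⟪x, y⟫_ℂ‖ ^ 2 := by
        rw [sum_sum_re_mul_im_eq_zero ha hb, sum_sum_re_mul_im_eq_zero hb ha, hnorm, add_zero,
          add_zero]

variable [DecidableEq ι]

lemma inner_identityVec_self : ⟪identityVec ι, identityVec ι⟫_ℝ = Fintype.card ι := by
  rw [real_inner_self_eq_norm_sq, EuclideanSpace.norm_sq_eq, Fintype.sum_prod_type]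
  simp [identityVec, apply_ite]

lemma inner_identityVec_rankOneVec (x : EuclideanSpace ℂ ι) :
    ⟪identityVec ι, rankOneVec x⟫_ℝ = ‖x‖ ^ 2 := by
  simp [identityVec, rankOneVec, PiLp.inner_apply, Fintype.sum_prod_type,
    EuclideanSpace.norm_sq_eq, Complex.sq_norm, Complex.normSq_apply, mul_comm]

noncomputable def tracelessRankOneVec (x : EuclideanSpace ℂ ι) : EuclideanSpace ℝ (ι × ι) :=
  rankOneVec x - (Fintype.card ι : ℝ)⁻¹ • identityVec ι

variable [Nonempty ι] {x y : EuclideanSpace ℂ ι}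

lemma inner_identityVec_tracelessRankOneVec (hx : ‖x‖ = 1) :
    ⟪identityVec ι, tracelessRankOneVec x⟫_ℝ = 0 := by
  rw [tracelessRankOneVec, inner_sub_right, real_inner_smul_right, inner_identityVec_rankOneVec,
    inner_identityVec_self, hx, inv_mul_cancel₀ (by positivity), one_pow, sub_self]

lemma inner_tracelessRankOneVec (hx : ‖x‖ = 1) (hy : ‖y‖ = 1) :
    ⟪tracelessRankOneVec x, tracelessRankOneVec y⟫_ℝ =
      ‖⟪x, y⟫_ℂ‖ ^ 2 - (Fintype.card ι : ℝ)⁻¹ := by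
  rw [tracelessRankOneVec, inner_sub_left, real_inner_smul_left,
    inner_identityVec_tracelessRankOneVec hy, mul_zero, sub_zero, tracelessRankOneVec,
    inner_sub_right, real_inner_smul_right, inner_rankOneVec, real_inner_comm,
    inner_identityVec_rankOneVec, hx, one_pow, mul_one]

theorem card_le_sq_of_pairwise_norm_inner_sq_lt {κ : Type*} [Fintype κ]
    {φ : κ → EuclideanSpace ℂ ι} (hφ : ∀ j, ‖φ j‖ = 1)
    (h : Pairwise fun j l ↦ ‖⟪φ j, φ l⟫_ℂ‖ ^ 2 < (Fintype.card ι : ℝ)⁻¹) :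
    Fintype.card κ ≤ Fintype.card ι ^ 2 := by
  let Q : κ → (ℝ ∙ identityVec ι)ᗮ := fun j ↦ ⟨tracelessRankOneVec (φ j),
    Submodule.mem_orthogonal_singleton_iff_inner_right.2
      (inner_identityVec_tracelessRankOneVec (hφ j))⟩
  have hQ : Pairwise fun j l ↦ ⟪Q j, Q l⟫_ℝ < 0 := fun j l hjl ↦ by
    change ⟪Q j, Q l⟫_ℝ < 0
    rw [Submodule.coe_inner, inner_tracelessRankOneVec (hφ j) (hφ l)]
    exact sub_neg.2 (h hjl)
  have hK := (ℝ ∙ identityVec ι).finrank_add_finrank_orthogonal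
  rw [finrank_span_singleton identityVec_ne_zero, finrank_euclideanSpace, Fintype.card_prod] at hK
  have hcard := card_le_finrank_add_one_of_pairwise_inner_neg hQ
  rw [sq]
  omega

end RankOneVec

/-- Orthoplex bound (complex case): more than `m²` unit vectors in `ℂ^m` have coherence at
least `1/√m`. -/
theorem orthoplex_bound_complex (m n : ℕ) (hm : 0 < m) (hn : m ^ 2 < n)
    (φ : Fin n → EuclideanSpace ℂ (Fin m)) (hunit : ∀ j, ‖φ j‖ = 1) :
    coherence ℂ φ ≥ 1 / Real.sqrt m := by
  have : Nonempty (Fin m) := ⟨⟨0, hm⟩⟩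
  by_contra! hcoh
  have hpair : Pairwise fun j l ↦ ‖⟪φ j, φ l⟫_ℂ‖ ^ 2 < (Fintype.card (Fin m) : ℝ)⁻¹ :=
    fun j l hjl ↦ calc
      ‖⟪φ j, φ l⟫_ℂ‖ ^ 2 < (1 / Real.sqrt m) ^ 2 :=
        pow_lt_pow_left₀ ((norm_inner_le_coherence φ hjl).trans_lt hcoh) (norm_nonneg _)
          two_ne_zero
      _ = (Fintype.card (Fin m) : ℝ)⁻¹ := by
        rw [div_pow, one_pow, Real.sq_sqrt m.cast_nonneg, Fintype.card_fin, one_div]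
  have hcard := card_le_sq_of_pairwise_norm_inner_sq_lt hunit hpair
  rw [Fintype.card_fin, Fintype.card_fin] at hcard
  omega
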